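/- Fix a real number l_B > 0 and let G = U(1)⋉𝔼² be the continuum magnetic Euclidean group. Represent U(1)-components by z ∈ [0,1) and rotation components by θ ∈ [0,2π), and define c₁(g₁,g₂) = z₁ + z₂ + (r₁ × R_{θ₁} r₂)/(2 l_B²) − z₁₂ and c₂(g₁,g₂) = (θ₁ + θ₂ − θ₁₂)/(2π), where z₁₂ and θ₁₂ are the representatives of the corresponding components of g₁g₂. Then c₁ and c₂ are integer-valued 2-cocycles on G; consequently, for any abelian group A (written multiplicatively) and any v, s ∈ A, the function 𝔴(g₁,g₂) = v^{c₁(g₁,g₂)} · s^{c₂(g₁,g₂)} is an A-valued 2-cocycle on G. -/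

import Mathlib

/-! Both cochains are coboundaries of real-valued representatives, corrected in the case of `c₁`
by the real magnetic phase `(r₁ × R_{θ₁} r₂)/(2 l_B²)`, which is itself a cocycle because the
cross product is bilinear and rotation invariant. A coboundary of a function on an associative
magma is a cocycle, so `c₁` and `c₂` are real cocycles; they are integer-valued because their
images in `ℝ/ℤ` and `ℝ/2πℤ` vanish. Integer cocycles exponentiate to cocycles in any abelian
group, and products of such cocycles are cocycles. -/

noncomputable section

universe u

/-- The cross product of plane vectors. -/
def crossR (r r' : Fin 2 → ℝ) : ℝ := r 0 * r' 1 - r 1 * r' 0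

/-- Rotation of the plane by the angle `θ`. -/
def rotAngle (θ : Real.Angle) (r : Fin 2 → ℝ) : Fin 2 → ℝ :=
  ![θ.cos * r 0 - θ.sin * r 1, θ.sin * r 0 + θ.cos * r 1]

/-- The underlying set of the continuum magnetic Euclidean group `U(1)⋉𝔼²`. -/
abbrev MagEuc : Type := AddCircle (1 : ℝ) × (Fin 2 → ℝ) × Real.Angle

/-- The continuum magnetic Euclidean group multiplication. -/
def magEucMul (lB : ℝ) (g₁ g₂ : MagEuc) : MagEuc :=
  (g₁.1 + g₂.1 +
      (↑((crossR g₁.2.1 (rotAngle g₁.2.2 g₂.2.1) / (2 * lB ^ 2) : ℝ)) : AddCircle (1 : ℝ)),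
    g₁.2.1 + rotAngle g₁.2.2 g₂.2.1,
    g₁.2.2 + g₂.2.2)

/-- The representative in `[0,1)` of an element of `ℝ/ℤ`. -/
def rep1 (z : AddCircle (1 : ℝ)) : ℝ :=
  haveI : Fact ((0 : ℝ) < 1) := ⟨one_pos⟩
  (AddCircle.equivIco 1 0 z : ℝ)

/-- The representative in `[0,2π)` of an angle. -/
def repAngle (θ : Real.Angle) : ℝ :=
  if θ.toReal < 0 then θ.toReal + 2 * Real.pi else θ.toReal

/-- The charge cocycle `c₁(g₁,g₂) = z₁ + z₂ + (r₁ × R_{θ₁} r₂)/(2 l_B²) − z₁₂`. -/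
def cOne (lB : ℝ) (g₁ g₂ : MagEuc) : ℝ :=
  rep1 g₁.1 + rep1 g₂.1 + crossR g₁.2.1 (rotAngle g₁.2.2 g₂.2.1) / (2 * lB ^ 2) -
    rep1 (magEucMul lB g₁ g₂).1

/-- The rotation cocycle `c₂(g₁,g₂) = (θ₁ + θ₂ − θ₁₂)/(2π)`. -/
def cTwo (lB : ℝ) (g₁ g₂ : MagEuc) : ℝ :=
  (repAngle g₁.2.2 + repAngle g₂.2.2 - repAngle (magEucMul lB g₁ g₂).2.2) / (2 * Real.pi)

/-- The symmetry fractionalization cochain `𝔴 = v^{c₁} · s^{c₂}`. -/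
def wVS (lB : ℝ) (A : Type u) [CommGroup A] (v s : A) (g₁ g₂ : MagEuc) : A :=
  v ^ ⌊cOne lB g₁ g₂⌋ * s ^ ⌊cTwo lB g₁ g₂⌋

section Cocycle

variable {G : Type*} (op : G → G → G)

def IsTwoCocycle {M : Type*} [AddCommGroup M] (c : G → G → M) : Prop :=
  ∀ g₁ g₂ g₃, c g₂ g₃ - c (op g₁ g₂) g₃ + c g₁ (op g₂ g₃) - c g₁ g₂ = 0

def IsMulTwoCocycle {A : Type*} [CommGroup A] (w : G → G → A) : Prop :=
  ∀ g₁ g₂ g₃, w g₂ g₃ * (w (op g₁ g₂) g₃)⁻¹ * w g₁ (op g₂ g₃) * (w g₁ g₂)⁻¹ = 1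

def coboundary {M : Type*} [AddCommGroup M] (f : G → M) (g₁ g₂ : G) : M :=
  f g₁ + f g₂ - f (op g₁ g₂)

variable {op}

theorem isTwoCocycle_coboundary {M : Type*} [AddCommGroup M]
    (assoc : ∀ a b c, op (op a b) c = op a (op b c)) (f : G → M) :
    IsTwoCocycle op (coboundary op f) := by
  intro g₁ g₂ g₃
  simp only [coboundary, assoc]
  abel

theorem IsTwoCocycle.add {M : Type*} [AddCommGroup M] {c c' : G → G → M}
    (hc : IsTwoCocycle op c) (hc' : IsTwoCocycle op c') :
    IsTwoCocycle op (fun g₁ g₂ => c g₁ g₂ + c' g₁ g₂) := by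
  intro g₁ g₂ g₃
  have h := congrArg₂ (· + ·) (hc g₁ g₂ g₃) (hc' g₁ g₂ g₃)
  rw [add_zero] at h
  beta_reduce
  rw [← h]
  abel

theorem IsTwoCocycle.floor {c : G → G → ℝ} (hc : IsTwoCocycle op c)
    (hint : ∀ g₁ g₂, ∃ k : ℤ, c g₁ g₂ = k) :
    IsTwoCocycle op (fun g₁ g₂ => ⌊c g₁ g₂⌋) := by
  choose n hn using hint
  intro g₁ g₂ g₃
  have h := hc g₁ g₂ g₃
  simp only [hn, Int.floor_intCast] at h ⊢
  exact_mod_cast h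

theorem IsTwoCocycle.zpow {A : Type*} [CommGroup A] {n : G → G → ℤ}
    (hn : IsTwoCocycle op n) (v : A) :
    IsMulTwoCocycle op (fun g₁ g₂ => v ^ n g₁ g₂) := by
  intro g₁ g₂ g₃
  simp only [← zpow_neg, ← zpow_add, ← sub_eq_add_neg, hn g₁ g₂ g₃, zpow_zero]

theorem IsMulTwoCocycle.mul {A : Type*} [CommGroup A] {w w' : G → G → A}
    (hw : IsMulTwoCocycle op w) (hw' : IsMulTwoCocycle op w') :
    IsMulTwoCocycle op (fun g₁ g₂ => w g₁ g₂ * w' g₁ g₂) := by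
  intro g₁ g₂ g₃
  have h := congrArg₂ (· * ·) (hw g₁ g₂ g₃) (hw' g₁ g₂ g₃)
  rw [mul_one] at h
  beta_reduce
  rw [← h]
  simp only [mul_inv]
  ac_rfl

end Cocycle

theorem crossR_add_left (a b c : Fin 2 → ℝ) : crossR (a + b) c = crossR a c + crossR b c := by
  simp only [crossR, Pi.add_apply]
  ring

theorem crossR_add_right (a b c : Fin 2 → ℝ) : crossR a (b + c) = crossR a b + crossR a c := by
  simp only [crossR, Pi.add_apply]
  ring

theorem crossR_rotAngle (θ : Real.Angle) (a b : Fin 2 → ℝ) :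
    crossR (rotAngle θ a) (rotAngle θ b) = crossR a b := by
  simp only [crossR, rotAngle, Matrix.cons_val_zero, Matrix.cons_val_one]
  linear_combination (a 0 * b 1 - a 1 * b 0) * Real.Angle.cos_sq_add_sin_sq θ

theorem rotAngle_add (θ₁ θ₂ : Real.Angle) (r : Fin 2 → ℝ) :
    rotAngle (θ₁ + θ₂) r = rotAngle θ₁ (rotAngle θ₂ r) := by
  funext i
  fin_cases i <;> simp only [rotAngle, Real.Angle.cos_add, Real.Angle.sin_add, Fin.zero_eta,
    Fin.mk_one, Matrix.cons_val_zero, Matrix.cons_val_one] <;> ring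

theorem rotAngle_map_add (θ : Real.Angle) (a b : Fin 2 → ℝ) :
    rotAngle θ (a + b) = rotAngle θ a + rotAngle θ b := by
  funext i
  fin_cases i <;> simp only [rotAngle, Pi.add_apply, Fin.zero_eta, Fin.mk_one,
    Matrix.cons_val_zero, Matrix.cons_val_one] <;> ring

def magneticPhase (lB : ℝ) (g₁ g₂ : MagEuc) : ℝ :=
  crossR g₁.2.1 (rotAngle g₁.2.2 g₂.2.1) / (2 * lB ^ 2)

theorem isTwoCocycle_magneticPhase (lB : ℝ) : IsTwoCocycle (magEucMul lB) (magneticPhase lB) := by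
  intro g₁ g₂ g₃
  simp only [magneticPhase, magEucMul, rotAngle_add, rotAngle_map_add, crossR_add_left,
    crossR_add_right, crossR_rotAngle]
  ring

theorem magEucMul_assoc (lB : ℝ) (g₁ g₂ g₃ : MagEuc) :
    magEucMul lB (magEucMul lB g₁ g₂) g₃ = magEucMul lB g₁ (magEucMul lB g₂ g₃) := by
  have hphase : magneticPhase lB g₁ g₂ + magneticPhase lB (magEucMul lB g₁ g₂) g₃ =
      magneticPhase lB g₂ g₃ + magneticPhase lB g₁ (magEucMul lB g₂ g₃) := by
    linear_combination -isTwoCocycle_magneticPhase lB g₁ g₂ g₃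
  have hphase' := congrArg ((↑) : ℝ → AddCircle (1 : ℝ)) hphase
  simp only [AddCircle.coe_add] at hphase'
  refine Prod.ext ?_ (Prod.ext ?_ ?_)
  · simp only [magEucMul, magneticPhase] at hphase' ⊢
    linear_combination (norm := abel_nf) hphase'
  · simp only [magEucMul, rotAngle_add, rotAngle_map_add, add_assoc]
  · exact add_assoc _ _ _

theorem coe_rep1 (z : AddCircle (1 : ℝ)) : ((rep1 z : ℝ) : AddCircle (1 : ℝ)) = z :=
  haveI : Fact ((0 : ℝ) < 1) := ⟨one_pos⟩
  (AddCircle.equivIco 1 0).symm_apply_apply z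

theorem coe_repAngle (θ : Real.Angle) : ((repAngle θ : ℝ) : Real.Angle) = θ := by
  unfold repAngle
  split
  · rw [Real.Angle.coe_add, Real.Angle.coe_two_pi, add_zero, Real.Angle.coe_toReal]
  · exact Real.Angle.coe_toReal θ

theorem cOne_eq_coboundary_add_magneticPhase (lB : ℝ) : cOne lB = fun g₁ g₂ =>
    coboundary (magEucMul lB) (fun g => rep1 g.1) g₁ g₂ + magneticPhase lB g₁ g₂ := by
  funext g₁ g₂
  simp only [cOne, coboundary, magneticPhase]
  ring

theorem cTwo_eq_coboundary (lB : ℝ) :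
    cTwo lB = coboundary (magEucMul lB) (fun g => repAngle g.2.2 / (2 * Real.pi)) := by
  funext g₁ g₂
  simp only [cTwo, coboundary]
  ring

theorem isTwoCocycle_cOne (lB : ℝ) : IsTwoCocycle (magEucMul lB) (cOne lB) := by
  rw [cOne_eq_coboundary_add_magneticPhase]
  exact (isTwoCocycle_coboundary (magEucMul_assoc lB) _).add (isTwoCocycle_magneticPhase lB)

theorem isTwoCocycle_cTwo (lB : ℝ) : IsTwoCocycle (magEucMul lB) (cTwo lB) := by
  rw [cTwo_eq_coboundary]
  exact isTwoCocycle_coboundary (magEucMul_assoc lB) _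

theorem cOne_mem_range_intCast (lB : ℝ) (g₁ g₂ : MagEuc) : ∃ k : ℤ, cOne lB g₁ g₂ = k := by
  have h : ((cOne lB g₁ g₂ : ℝ) : AddCircle (1 : ℝ)) = 0 := by
    simp only [cOne, AddCircle.coe_sub, AddCircle.coe_add, coe_rep1, magEucMul, sub_self]
  obtain ⟨k, hk⟩ := (AddCircle.coe_eq_zero_iff 1).mp h
  exact ⟨k, by rw [← hk, zsmul_one]⟩

theorem cTwo_mem_range_intCast (lB : ℝ) (g₁ g₂ : MagEuc) : ∃ k : ℤ, cTwo lB g₁ g₂ = k := by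
  have h : ((repAngle g₁.2.2 + repAngle g₂.2.2 - repAngle (magEucMul lB g₁ g₂).2.2 : ℝ) :
      Real.Angle) = 0 := by
    simp only [Real.Angle.coe_sub, Real.Angle.coe_add, coe_repAngle, magEucMul, sub_self]
  obtain ⟨k, hk⟩ := Real.Angle.coe_eq_zero_iff.mp h
  refine ⟨k, ?_⟩
  rw [cTwo, ← hk, zsmul_eq_mul]
  field_simp

theorem continuum_fractionalization_cocycles_general (lB : ℝ) :
    (∀ g₁ g₂ : MagEuc, ∃ k : ℤ, cOne lB g₁ g₂ = k) ∧
    (∀ g₁ g₂ : MagEuc, ∃ k : ℤ, cTwo lB g₁ g₂ = k) ∧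
    (∀ g₁ g₂ g₃ : MagEuc,
      cOne lB g₂ g₃ - cOne lB (magEucMul lB g₁ g₂) g₃ + cOne lB g₁ (magEucMul lB g₂ g₃) -
        cOne lB g₁ g₂ = 0) ∧
    (∀ g₁ g₂ g₃ : MagEuc,
      cTwo lB g₂ g₃ - cTwo lB (magEucMul lB g₁ g₂) g₃ + cTwo lB g₁ (magEucMul lB g₂ g₃) -
        cTwo lB g₁ g₂ = 0) ∧
    (∀ (A : Type u) [CommGroup A], ∀ v s : A, ∀ g₁ g₂ g₃ : MagEuc,
      wVS lB A v s g₂ g₃ * (wVS lB A v s (magEucMul lB g₁ g₂) g₃)⁻¹ *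
          wVS lB A v s g₁ (magEucMul lB g₂ g₃) * (wVS lB A v s g₁ g₂)⁻¹ = 1) := by
  refine ⟨cOne_mem_range_intCast lB, cTwo_mem_range_intCast lB, isTwoCocycle_cOne lB,
    isTwoCocycle_cTwo lB, fun A _ v s => ?_⟩
  exact (((isTwoCocycle_cOne lB).floor (cOne_mem_range_intCast lB)).zpow v).mul
    (((isTwoCocycle_cTwo lB).floor (cTwo_mem_range_intCast lB)).zpow s)

/-- `c₁` and `c₂` are integer-valued 2-cocycles on `U(1)⋉𝔼²`; consequently for any
abelian group `A` and `v, s ∈ A` the function `𝔴 = v^{c₁} s^{c₂}` is an `A`-valued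
2-cocycle. -/
theorem continuum_fractionalization_cocycles (lB : ℝ) (hlB : 0 < lB) :
    (∀ g₁ g₂ : MagEuc, ∃ k : ℤ, cOne lB g₁ g₂ = k) ∧
    (∀ g₁ g₂ : MagEuc, ∃ k : ℤ, cTwo lB g₁ g₂ = k) ∧
    (∀ g₁ g₂ g₃ : MagEuc,
      cOne lB g₂ g₃ - cOne lB (magEucMul lB g₁ g₂) g₃ + cOne lB g₁ (magEucMul lB g₂ g₃) -
        cOne lB g₁ g₂ = 0) ∧
    (∀ g₁ g₂ g₃ : MagEuc,
      cTwo lB g₂ g₃ - cTwo lB (magEucMul lB g₁ g₂) g₃ + cTwo lB g₁ (magEucMul lB g₂ g₃) -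
        cTwo lB g₁ g₂ = 0) ∧
    (∀ (A : Type u) [CommGroup A], ∀ v s : A, ∀ g₁ g₂ g₃ : MagEuc,
      wVS lB A v s g₂ g₃ * (wVS lB A v s (magEucMul lB g₁ g₂) g₃)⁻¹ *
          wVS lB A v s g₁ (magEucMul lB g₂ g₃) * (wVS lB A v s g₁ g₂)⁻¹ = 1) :=
  continuum_fractionalization_cocycles_general lB
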